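/- For a valuation μ on A and f : A → ℝ_l⁺, define s_{f,m,n} = (1/m) ∑_{i=1}^{mn} μ([f > i/m]) where [f > q] = {x ∈ A | q < f(x)}. If m divides m′ and n ≤ n′ then s_{f,m,n} ≤ s_{f,m′,n′}; consequently the family (s_{f,m,n})_{m,n ≥ 1} is directed. -/

import Mathlib

/-- The initial σ-frame `𝕊`, as the least subset of the propositions `Ω = Prop`
containing `False` and `True` and closed under joins of increasing ω-chains
(equivalently, the image of the free ω-cpo completion of `𝔹 = {⊥ ≤ ⊤}` in `Ω`). -/
inductive InS : Prop → Prop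
  | bot : InS False
  | top : InS True
  | sup (c : ℕ → Prop) (mono : ∀ n, c n → c (n + 1)) (h : ∀ n, InS (c n)) :
      InS (∃ n, c n)

theorem InS.of_decidable (p : Prop) [Decidable p] : InS p := by
  by_cases h : p
  · rw [eq_true h]; exact InS.top
  · rw [eq_false h]; exact InS.bot

/-- A map between preorders is ω-(Scott-)continuous if it is monotone and preserves
least upper bounds of enumerable directed subsets. -/
def OmegaContinuous {C D : Type} [Preorder C] [Preorder D] (f : C → D) : Prop :=
  Monotone f ∧
    ∀ (U : Set C) (x : C), U.Countable → U.Nonempty → DirectedOn (· ≤ ·) U →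
      IsLUB U x → IsLUB (f '' U) (f x)

/-- A preorder is an ω-cpo if every enumerable directed subset has a least upper bound. -/
def IsOmegaCPO (C : Type) [Preorder C] : Prop :=
  ∀ U : Set C, U.Countable → U.Nonempty → DirectedOn (· ≤ ·) U → ∃ x, IsLUB U x

/-- A cover-preserving monotone map from an ω-cpo presentation `(P, Cov)` into an
ordered set: the image of each cover has a least upper bound above the image of the
covered element. -/
def CovMorphism {P C : Type} [Preorder P] [Preorder C]
    (Cov : P → Set P → Prop) (f : P → C) : Prop :=
  Monotone f ∧ ∀ p U, Cov p U → ∃ s, IsLUB (f '' U) s ∧ f p ≤ s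

/-- `(Pω, η)` is the free ω-cpo completion of the ω-cpo presentation `(P, Cov)`:
`Pω` is an ω-cpo, `η` is a cover-preserving monotone map, and every cover-preserving
monotone map from `P` into an ω-cpo extends uniquely to an ω-continuous map on `Pω`. -/
structure IsFreeOmegaCompletion {P : Type} [Preorder P] (Cov : P → Set P → Prop)
    (Pω : Type) [PartialOrder Pω] (η : P → Pω) : Prop where
  cpo : IsOmegaCPO Pω
  eta_morph : CovMorphism Cov η
  extend_unique : ∀ (C : Type) [PartialOrder C], IsOmegaCPO C →
    ∀ f : P → C, CovMorphism Cov f →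
      ∃! g : Pω → C, OmegaContinuous g ∧ ∀ p, g (η p) = f p

/-- The Sierpinski space as a subtype of the propositions, ordered by implication. -/
abbrev Sierp := {p : Prop // InS p}

theorem InS.or {p q : Prop} (hp : InS p) (hq : InS q) : InS (p ∨ q) := by
  induction hp with
  | bot => simp only [false_or]; exact hq
  | top => simp only [true_or]; exact InS.top
  | sup c mono h ih =>
      have e : ((∃ n, c n) ∨ q) = (∃ n, c n ∨ q) := propext <| by
        constructor
        · rintro (⟨n, hn⟩ | hq')
          · exact ⟨n, Or.inl hn⟩
          · exact ⟨0, Or.inr hq'⟩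
        · rintro ⟨n, hn | hq'⟩
          · exact Or.inl ⟨n, hn⟩
          · exact Or.inr hq'
      rw [e]
      exact InS.sup _ (fun n => Or.imp_left (mono n)) ih

theorem InS.and {p q : Prop} (hp : InS p) (hq : InS q) : InS (p ∧ q) := by
  induction hp with
  | bot => simp only [false_and]; exact InS.bot
  | top => simp only [true_and]; exact hq
  | sup c mono h ih =>
      have e : ((∃ n, c n) ∧ q) = (∃ n, c n ∧ q) := propext <| by
        constructor
        · rintro ⟨⟨n, hn⟩, hq'⟩
          exact ⟨n, hn, hq'⟩
        · rintro ⟨n, hn, hq'⟩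
          exact ⟨⟨n, hn⟩, hq'⟩
      rw [e]
      exact InS.sup _ (fun n => And.imp_left (mono n)) ih

theorem InS.exists_nat (p : ℕ → Prop) (h : ∀ n, InS (p n)) : InS (∃ n, p n) := by
  have key : ∀ m, InS (∃ k, k ≤ m ∧ p k) := by
    intro m
    induction m with
    | zero =>
        have e : (∃ k, k ≤ 0 ∧ p k) = p 0 := propext <| by
          constructor
          · rintro ⟨k, hk, hp⟩
            rwa [Nat.le_zero.mp hk] at hp
          · exact fun hp => ⟨0, le_refl _, hp⟩
        rw [e]; exact h 0
    | succ m ih =>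
        have e : (∃ k, k ≤ m + 1 ∧ p k) = ((∃ k, k ≤ m ∧ p k) ∨ p (m + 1)) :=
          propext <| by
            constructor
            · rintro ⟨k, hk, hp⟩
              rcases Nat.eq_or_lt_of_le hk with rfl | hk'
              · exact Or.inr hp
              · exact Or.inl ⟨k, Nat.lt_succ_iff.mp hk', hp⟩
            · rintro (⟨k, hk, hp⟩ | hp)
              · exact ⟨k, hk.trans (Nat.le_succ m), hp⟩
              · exact ⟨m + 1, le_refl _, hp⟩
        rw [e]; exact ih.or (h (m + 1))
  have e : (∃ n, p n) = (∃ m, ∃ k, k ≤ m ∧ p k) := propext <| by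
    constructor
    · rintro ⟨n, hn⟩
      exact ⟨n, n, le_refl _, hn⟩
    · rintro ⟨m, k, _, hk⟩
      exact ⟨k, hk⟩
  rw [e]
  exact InS.sup _ (fun m ⟨k, hk, hp⟩ => ⟨k, hk.trans (Nat.le_succ m), hp⟩) key

def Sierp.botS : Sierp := ⟨False, InS.bot⟩
def Sierp.topS : Sierp := ⟨True, InS.top⟩
def Sierp.or (s t : Sierp) : Sierp := ⟨s.1 ∨ t.1, s.2.or t.2⟩
def Sierp.and (s t : Sierp) : Sierp := ⟨s.1 ∧ t.1, s.2.and t.2⟩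

/-- Enumerable joins in the Sierpinski space. -/
def Sierp.joinSeq (s : ℕ → Sierp) : Sierp :=
  ⟨∃ n, (s n).1, InS.exists_nat _ (fun n => (s n).2)⟩

/-- A lower real: an `𝕊`-valued, inhabited, rounded, downward-closed cut of rationals. -/
structure LowerReal where
  cut : ℚ → Prop
  inS : ∀ q, InS (cut q)
  inhab : ∃ q, cut q
  rounded : ∀ q, cut q → ∃ q', q < q' ∧ cut q'
  lower : ∀ q q', q < q' → cut q' → cut q

instance : Preorder LowerReal where
  le L₁ L₂ := ∀ q, L₁.cut q → L₂.cut q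
  le_refl _ _ h := h
  le_trans _ _ _ h₁ h₂ q hq := h₂ q (h₁ q hq)

/-- The lower real associated to a rational number. -/
def ratLR (q : ℚ) : LowerReal where
  cut p := p < q
  inS _ := InS.of_decidable _
  inhab := ⟨q - 1, by linarith⟩
  rounded p hp := ⟨(p + q) / 2, by constructor <;> linarith⟩
  lower _ _ h h' := lt_trans h h'

/-- The non-negative rationals. -/
abbrev QPlus := {q : ℚ // 0 ≤ q}

/-- The non-negative lower reals `ℝ_l⁺`. -/
abbrev NNLowerReal := {L : LowerReal // ∀ q : ℚ, q < 0 → L.cut q}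

/-- The non-negative lower real associated to a non-negative rational. -/
def ratNN (q : QPlus) : NNLowerReal :=
  ⟨ratLR q.1, fun _ hp => lt_of_lt_of_le hp q.2⟩

def zeroNN : NNLowerReal := ratNN ⟨0, le_refl 0⟩
def oneNN : NNLowerReal := ratNN ⟨1, by norm_num⟩

/-- `r : 𝕊 → ℝ_l⁺`, the unique ω-continuous map with `r ⊥ = 0` and `r ⊤ = 1`;
`indicatorLR (U a)` is the real indicator function `𝟙_U` of an open `U`. -/
def indicatorLR (s : Sierp) : NNLowerReal :=
  ⟨{ cut := fun q => q < 0 ∨ (s.1 ∧ q < 1)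
     inS := fun q => by
       show InS (q < 0 ∨ (s.1 ∧ q < 1))
       by_cases h0 : q < 0
       · rw [eq_true (Or.inl h0 : q < 0 ∨ (s.1 ∧ q < 1))]; exact InS.top
       · rw [eq_false h0, false_or]
         by_cases h1 : q < 1
         · rw [eq_true h1, and_true]; exact s.2
         · rw [eq_false h1, and_false]; exact InS.bot
     inhab := ⟨-1, Or.inl (by norm_num)⟩
     rounded := fun q hq => by
       rcases hq with h | ⟨hs, h1⟩
       · exact ⟨q / 2, by linarith, Or.inl (by linarith)⟩
       · exact ⟨(q + 1) / 2, by
           constructor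
           · linarith
           · exact Or.inr ⟨hs, by linarith⟩⟩
     lower := fun q q' h hq' => by
       rcases hq' with h' | ⟨hs, h1⟩
       · exact Or.inl (lt_trans h h')
       · by_cases h0 : q < 0
         · exact Or.inl h0
         · exact Or.inr ⟨hs, lt_trans h h1⟩ },
   fun q hq => Or.inl hq⟩

/-- Specification of the addition on the non-negative lower reals: ω-continuous in
each argument and extending addition of non-negative rationals. -/
def AddSpecNN (add : NNLowerReal → NNLowerReal → NNLowerReal) : Prop :=
  (∀ L, OmegaContinuous (add L)) ∧ (∀ L, OmegaContinuous (fun x => add x L)) ∧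
    ∀ q q' : QPlus, add (ratNN q) (ratNN q') = ratNN ⟨q.1 + q'.1, add_nonneg q.2 q'.2⟩

/-- Specification of the multiplication on the non-negative lower reals: ω-continuous
in each argument and extending multiplication of non-negative rationals. -/
def MulSpecNN (mul : NNLowerReal → NNLowerReal → NNLowerReal) : Prop :=
  (∀ L, OmegaContinuous (mul L)) ∧ (∀ L, OmegaContinuous (fun x => mul x L)) ∧
    ∀ q q' : QPlus, mul (ratNN q) (ratNN q') = ratNN ⟨q.1 * q'.1, mul_nonneg q.2 q'.2⟩

/-- A lower integral on `A`: an ω-continuous, bottom-preserving, additive map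
`(A → ℝ_l⁺) → ℝ_l⁺`. -/
def IsLowerIntegral {A : Type} (add : NNLowerReal → NNLowerReal → NNLowerReal)
    (I : (A → NNLowerReal) → NNLowerReal) : Prop :=
  OmegaContinuous I ∧ I (fun _ => zeroNN) = zeroNN ∧
    ∀ f g : A → NNLowerReal, I (fun a => add (f a) (g a)) = add (I f) (I g)

/-- A valuation on `A`: an ω-continuous, bottom-preserving, modular map
`𝒪(A) = (A → 𝕊) → ℝ_l⁺`. -/
def IsValuation {A : Type} (add : NNLowerReal → NNLowerReal → NNLowerReal)
    (μ : (A → Sierp) → NNLowerReal) : Prop :=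
  OmegaContinuous μ ∧ μ (fun _ => Sierp.botS) = zeroNN ∧
    ∀ U V : A → Sierp,
      add (μ U) (μ V) =
        add (μ (fun a => (U a).or (V a))) (μ (fun a => (U a).and (V a)))

/-- The open subset `[f > q] = {x ∈ A | q < f x}` of `A`. -/
def openGT {A : Type} (f : A → NNLowerReal) (q : ℚ) : A → Sierp :=
  fun a => ⟨(f a).1.cut q, (f a).1.inS q⟩

/-- The approximating simple sum `s_{f,m,n} = (1/m) ∑_{i=1}^{mn} μ([f > i/m])`. -/
def sFMN {A : Type} (add mul : NNLowerReal → NNLowerReal → NNLowerReal)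
    (μ : (A → Sierp) → NNLowerReal) (f : A → NNLowerReal) (m n : ℕ) : NNLowerReal :=
  mul (ratNN ⟨1 / (m : ℚ), by positivity⟩)
    ((List.range (m * n)).foldr
      (fun i acc => add (μ (openGT f (((i : ℚ) + 1) / (m : ℚ)))) acc) zeroNN)

/-! Every non-negative lower real is the directed supremum of the non-negative rationals
below it, so the laws of addition and multiplication on `ℝ_l⁺` that the proof needs
(associativity, distributivity, units) follow from the rational case by ω-continuity in
each argument. With these, for `m' = m * k`, each term `(1/m) μ([f > (j+1)/m])` of
`s_{f,m,n}` splits into `k` copies of `(1/(mk)) μ([f > (j+1)/m])`, the `r`-th of which is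
dominated by the term `(1/(mk)) μ([f > (jk+r+1)/(mk)])` of `s_{f,m',n}` because
`(jk+r+1)/(mk) ≤ (j+1)/m` and `μ` is monotone; raising `n` to `n'` only adds terms. -/

section OmegaContinuous

variable {B C D E : Type} [Preorder B] [Preorder C] [Preorder D] [Preorder E]

theorem omegaContinuous_id : OmegaContinuous (fun x : C => x) :=
  ⟨monotone_id, fun _ _ _ _ _ h => by simpa using h⟩

theorem omegaContinuous_const (d : D) : OmegaContinuous (fun _ : C => d) := by
  refine ⟨monotone_const, fun U x _ hne _ _ => ?_⟩
  rw [hne.image_const]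
  exact isLUB_singleton

theorem OmegaContinuous.comp {g : D → E} {f : C → D} (hg : OmegaContinuous g)
    (hf : OmegaContinuous f) : OmegaContinuous (fun x => g (f x)) := by
  refine ⟨hg.1.comp hf.1, fun U x hc hne hd hl => ?_⟩
  have h := hg.2 (f '' U) (f x) (hc.image f) (hne.image f) (hd.mono_comp hf.1)
    (hf.2 U x hc hne hd hl)
  rwa [← Set.image_comp] at h

/-- Directed suprema can be taken one argument at a time. -/
theorem OmegaContinuous.comp₂ {F : C → D → E} (hF₁ : ∀ d, OmegaContinuous (fun c => F c d))
    (hF₂ : ∀ c, OmegaContinuous (F c)) {g : B → C} {h : B → D} (hg : OmegaContinuous g)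
    (hh : OmegaContinuous h) : OmegaContinuous (fun x => F (g x) (h x)) := by
  have hmono : Monotone (fun x => F (g x) (h x)) := fun a b hab =>
    ((hF₁ (h a)).1 (hg.1 hab)).trans ((hF₂ (g b)).1 (hh.1 hab))
  refine ⟨hmono, fun U x hc hne hd hl => ⟨?_, fun b hb => ?_⟩⟩
  · rintro _ ⟨u, hu, rfl⟩
    exact hmono (hl.1 hu)
  refine (((hF₁ (h x)).comp hg).2 U x hc hne hd hl).2 ?_
  rintro _ ⟨u, hu, rfl⟩
  refine (((hF₂ (g u)).comp hh).2 U x hc hne hd hl).2 ?_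
  rintro _ ⟨v, hv, rfl⟩
  obtain ⟨w, hw, huw, hvw⟩ := hd u hu v hv
  exact (((hF₁ (h v)).1 (hg.1 huw)).trans ((hF₂ (g w)).1 (hh.1 hvw))).trans (hb ⟨w, hw, rfl⟩)

end OmegaContinuous

theorem LowerReal.ext {L₁ L₂ : LowerReal} (h : ∀ q, L₁.cut q ↔ L₂.cut q) : L₁ = L₂ := by
  obtain ⟨c₁, _, _, _, _⟩ := L₁
  obtain ⟨c₂, _, _, _, _⟩ := L₂
  obtain rfl : c₁ = c₂ := funext fun q => propext (h q)
  rfl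

theorem LowerReal.cut_anti (L : LowerReal) {q q' : ℚ} (h : q ≤ q') (hq' : L.cut q') :
    L.cut q :=
  h.lt_or_eq.elim (fun hlt => L.lower q q' hlt hq') (fun heq => heq ▸ hq')

theorem NNLowerReal.le_antisymm {x y : NNLowerReal} (hxy : x ≤ y) (hyx : y ≤ x) : x = y :=
  Subtype.ext (LowerReal.ext fun q => ⟨hxy q, hyx q⟩)

theorem ratNN_congr {a b : QPlus} (h : a.1 = b.1) : ratNN a = ratNN b :=
  congrArg ratNN (Subtype.ext h)

theorem ratNN_mono : Monotone ratNN :=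
  fun _ _ hab _ hp => lt_of_lt_of_le hp hab

theorem zeroNN_le (x : NNLowerReal) : zeroNN ≤ x := fun q hq => x.2 q hq

def ratsBelow (x : NNLowerReal) : Set NNLowerReal := ratNN '' {q | ratNN q ≤ x}

theorem isLUB_ratsBelow (x : NNLowerReal) : IsLUB (ratsBelow x) x := by
  refine ⟨fun _ ⟨q, hq, hy⟩ => hy ▸ hq, fun b hb p hp => ?_⟩
  rcases lt_or_ge p 0 with hneg | hnonneg
  · exact b.2 p hneg
  obtain ⟨p', hpp', hp'⟩ := x.1.rounded p hp
  have hp'x : ratNN ⟨p', hnonneg.trans hpp'.le⟩ ≤ x := fun r hr => x.1.lower r p' hr hp'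
  exact hb ⟨_, hp'x, rfl⟩ p hpp'

theorem directedOn_ratsBelow (x : NNLowerReal) : DirectedOn (· ≤ ·) (ratsBelow x) := by
  rintro _ ⟨a, ha, rfl⟩ _ ⟨b, hb, rfl⟩
  rcases le_total a b with hab | hba
  · exact ⟨ratNN b, ⟨b, hb, rfl⟩, ratNN_mono hab, le_rfl⟩
  · exact ⟨ratNN a, ⟨a, ha, rfl⟩, le_rfl, ratNN_mono hba⟩

theorem OmegaContinuous.le_of_ratNN {D : Type} [Preorder D] {g h : NNLowerReal → D}
    (hg : OmegaContinuous g) (hh : Monotone h) (hgh : ∀ q, g (ratNN q) ≤ h (ratNN q)) :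
    ∀ x, g x ≤ h x := by
  intro x
  have hne : (ratsBelow x).Nonempty := ⟨_, ⟨0, zeroNN_le x, rfl⟩⟩
  refine (hg.2 _ x ((Set.to_countable _).image ratNN) hne (directedOn_ratsBelow x)
    (isLUB_ratsBelow x)).2 ?_
  rintro _ ⟨_, ⟨q, hq, rfl⟩, rfl⟩
  exact (hgh q).trans (hh hq)

theorem OmegaContinuous.eq_of_ratNN {g h : NNLowerReal → NNLowerReal}
    (hg : OmegaContinuous g) (hh : OmegaContinuous h)
    (hgh : ∀ q, g (ratNN q) = h (ratNN q)) : ∀ x, g x = h x := fun x =>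
  NNLowerReal.le_antisymm (hg.le_of_ratNN hh.1 (fun q => (hgh q).le) x)
    (hh.le_of_ratNN hg.1 (fun q => (hgh q).ge) x)

section Arithmetic

variable {add mul : NNLowerReal → NNLowerReal → NNLowerReal}

theorem AddSpecNN.add_le_add (hadd : AddSpecNN add) {a a' b b' : NNLowerReal} (ha : a ≤ a')
    (hb : b ≤ b') : add a b ≤ add a' b' :=
  ((hadd.2.1 b).1 ha).trans ((hadd.1 a').1 hb)

theorem AddSpecNN.zero_add (hadd : AddSpecNN add) (x : NNLowerReal) : add zeroNN x = x := by
  revert x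
  refine (hadd.1 zeroNN).eq_of_ratNN omegaContinuous_id fun q => ?_
  rw [zeroNN, hadd.2.2]
  exact ratNN_congr (_root_.zero_add q.1)

theorem AddSpecNN.add_assoc (hadd : AddSpecNN add) (x y z : NNLowerReal) :
    add (add x y) z = add x (add y z) := by
  revert x
  refine ((hadd.2.1 z).comp (hadd.2.1 y)).eq_of_ratNN (hadd.2.1 _) fun p => ?_
  revert y
  refine ((hadd.2.1 z).comp (hadd.1 _)).eq_of_ratNN ((hadd.1 _).comp (hadd.2.1 z))
    fun q => ?_
  revert z
  refine (hadd.1 _).eq_of_ratNN ((hadd.1 _).comp (hadd.1 _)) fun r => ?_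
  rw [hadd.2.2, hadd.2.2, hadd.2.2, hadd.2.2]
  exact ratNN_congr (_root_.add_assoc p.1 q.1 r.1)

theorem MulSpecNN.mul_zero (hmul : MulSpecNN mul) (x : NNLowerReal) : mul x zeroNN = zeroNN := by
  revert x
  refine (hmul.2.1 zeroNN).eq_of_ratNN (omegaContinuous_const _) fun q => ?_
  rw [zeroNN, hmul.2.2]
  exact ratNN_congr (MulZeroClass.mul_zero q.1)

theorem MulSpecNN.zero_mul (hmul : MulSpecNN mul) (x : NNLowerReal) : mul zeroNN x = zeroNN := by
  revert x
  refine (hmul.1 zeroNN).eq_of_ratNN (omegaContinuous_const _) fun q => ?_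
  rw [zeroNN, hmul.2.2]
  exact ratNN_congr (MulZeroClass.zero_mul q.1)

theorem MulSpecNN.mul_add (hmul : MulSpecNN mul) (hadd : AddSpecNN add) (x y z : NNLowerReal) :
    mul x (add y z) = add (mul x y) (mul x z) := by
  revert x
  refine (hmul.2.1 _).eq_of_ratNN
    (OmegaContinuous.comp₂ hadd.2.1 hadd.1 (hmul.2.1 y) (hmul.2.1 z)) fun p => ?_
  revert y
  refine ((hmul.1 _).comp (hadd.2.1 z)).eq_of_ratNN ((hadd.2.1 _).comp (hmul.1 _))
    fun q => ?_
  revert z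
  refine ((hmul.1 _).comp (hadd.1 _)).eq_of_ratNN ((hadd.1 _).comp (hmul.1 _)) fun r => ?_
  rw [hadd.2.2, hmul.2.2, hmul.2.2, hmul.2.2, hadd.2.2]
  exact ratNN_congr (_root_.mul_add p.1 q.1 r.1)

theorem MulSpecNN.add_mul (hmul : MulSpecNN mul) (hadd : AddSpecNN add) (x y z : NNLowerReal) :
    mul (add x y) z = add (mul x z) (mul y z) := by
  revert z
  refine (hmul.1 _).eq_of_ratNN
    (OmegaContinuous.comp₂ hadd.2.1 hadd.1 (hmul.1 x) (hmul.1 y)) fun r => ?_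
  revert x
  refine ((hmul.2.1 _).comp (hadd.2.1 y)).eq_of_ratNN ((hadd.2.1 _).comp (hmul.2.1 _))
    fun p => ?_
  revert y
  refine ((hmul.2.1 _).comp (hadd.1 _)).eq_of_ratNN ((hadd.1 _).comp (hmul.2.1 _))
    fun q => ?_
  rw [hadd.2.2, hmul.2.2, hmul.2.2, hmul.2.2, hadd.2.2]
  exact ratNN_congr (_root_.add_mul p.1 q.1 r.1)

end Arithmetic

def sumNN (add : NNLowerReal → NNLowerReal → NNLowerReal) (g : ℕ → NNLowerReal) (n : ℕ) :
    NNLowerReal :=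
  (List.range n).foldr (fun i acc => add (g i) acc) zeroNN

section FiniteSums

variable {add mul : NNLowerReal → NNLowerReal → NNLowerReal}

theorem sumNN_zero (g : ℕ → NNLowerReal) : sumNN add g 0 = zeroNN := rfl

theorem sumNN_succ (g : ℕ → NNLowerReal) (n : ℕ) :
    sumNN add g (n + 1) = add (g 0) (sumNN add (fun i => g (i + 1)) n) := by
  rw [sumNN, List.range_succ_eq_map, List.foldr_cons, List.foldr_map]
  rfl

theorem sumNN_congr {g g' : ℕ → NNLowerReal} {n : ℕ} (h : ∀ i < n, g i = g' i) :
    sumNN add g n = sumNN add g' n := by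
  induction n generalizing g g' with
  | zero => rfl
  | succ n ih =>
    rw [sumNN_succ, sumNN_succ, h 0 n.succ_pos, ih fun i hi => h (i + 1) (by omega)]

theorem AddSpecNN.sumNN_mono (hadd : AddSpecNN add) {g g' : ℕ → NNLowerReal} {n : ℕ}
    (h : ∀ i < n, g i ≤ g' i) : sumNN add g n ≤ sumNN add g' n := by
  induction n generalizing g g' with
  | zero => exact le_rfl
  | succ n ih =>
    rw [sumNN_succ, sumNN_succ]
    exact hadd.add_le_add (h 0 n.succ_pos) (ih fun i hi => h (i + 1) (by omega))

theorem AddSpecNN.sumNN_le_sumNN_of_le (hadd : AddSpecNN add) (g : ℕ → NNLowerReal)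
    {n n' : ℕ} (h : n ≤ n') : sumNN add g n ≤ sumNN add g n' := by
  induction n generalizing g n' with
  | zero => exact zeroNN_le _
  | succ n ih =>
    obtain ⟨n', rfl⟩ : ∃ n'', n' = n'' + 1 := ⟨n' - 1, by omega⟩
    rw [sumNN_succ, sumNN_succ]
    exact hadd.add_le_add le_rfl (ih _ (by omega))

theorem AddSpecNN.sumNN_add (hadd : AddSpecNN add) (g : ℕ → NNLowerReal) (a b : ℕ) :
    sumNN add g (a + b) = add (sumNN add g a) (sumNN add (fun i => g (a + i)) b) := by
  induction a generalizing g with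
  | zero => simp only [Nat.zero_add, sumNN_zero, hadd.zero_add]
  | succ a ih =>
    rw [Nat.add_right_comm, sumNN_succ, sumNN_succ, ih, hadd.add_assoc]
    simp only [Nat.add_right_comm _ 1]

theorem AddSpecNN.sumNN_mul (hadd : AddSpecNN add) (g : ℕ → NNLowerReal) (N k : ℕ) :
    sumNN add g (N * k) = sumNN add (fun j => sumNN add (fun r => g (j * k + r)) k) N := by
  induction N generalizing g with
  | zero => simp only [Nat.zero_mul, sumNN_zero]
  | succ N ih =>
    rw [Nat.succ_mul, Nat.add_comm, hadd.sumNN_add, ih, sumNN_succ]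
    simp only [Nat.zero_mul, Nat.zero_add, Nat.succ_mul, Nat.add_assoc, Nat.add_comm k]

theorem MulSpecNN.mul_sumNN (hmul : MulSpecNN mul) (hadd : AddSpecNN add) (c : NNLowerReal)
    (g : ℕ → NNLowerReal) (n : ℕ) :
    mul c (sumNN add g n) = sumNN add (fun i => mul c (g i)) n := by
  induction n generalizing g with
  | zero => exact hmul.mul_zero c
  | succ n ih => rw [sumNN_succ, sumNN_succ, hmul.mul_add hadd, ih]

theorem MulSpecNN.mul_ratNN_eq_sumNN_const (hmul : MulSpecNN mul) (hadd : AddSpecNN add)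
    {a b : QPlus} {k : ℕ} (hab : a.1 = k * b.1) (x : NNLowerReal) :
    mul (ratNN a) x = sumNN add (fun _ => mul (ratNN b) x) k := by
  induction k generalizing a with
  | zero =>
    rw [sumNN_zero, ratNN_congr (b := ⟨0, le_rfl⟩) (by simpa using hab)]
    exact hmul.zero_mul x
  | succ k ih =>
    have hsplit : ratNN a = add (ratNN b) (ratNN ⟨k * b.1, mul_nonneg k.cast_nonneg b.2⟩) := by
      rw [hadd.2.2]
      exact ratNN_congr (by push_cast at hab; linarith)
    rw [hsplit, hmul.add_mul hadd, ih (a := ⟨k * b.1, _⟩) rfl, sumNN_succ]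

end FiniteSums

/-- The cast `(i : ℚ)` in `sFMN` makes Lean coerce `List.range (m * n)` to a list of
rationals before folding. -/
theorem sFMN_eq_mul_sumNN {A : Type} (add mul : NNLowerReal → NNLowerReal → NNLowerReal)
    (μ : (A → Sierp) → NNLowerReal) (f : A → NNLowerReal) (m n : ℕ) :
    sFMN add mul μ f m n = mul (ratNN ⟨1 / (m : ℚ), by positivity⟩)
      (sumNN add (fun i => μ (openGT f (((i : ℚ) + 1) / (m : ℚ)))) (m * n)) := by
  rw [sFMN, bind_pure_comp, List.map_eq_map, List.foldr_map]
  rfl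

theorem openGT_anti {A : Type} (f : A → NNLowerReal) {q q' : ℚ} (h : q ≤ q') :
    openGT f q' ≤ openGT f q :=
  fun a => (f a).1.cut_anti h

theorem mul_add_add_one_div_mul_le {m k j r : ℕ} (hk : 0 < k) (hr : r < k) :
    ((j * k + r : ℕ) + 1 : ℚ) / ((m * k : ℕ) : ℚ) ≤ ((j : ℚ) + 1) / (m : ℚ) := by
  have hk' : (0 : ℚ) < k := by exact_mod_cast hk
  have hblock : ((j * k + r : ℕ) + 1 : ℚ) ≤ ((j : ℚ) + 1) * k := by
    have : j * k + r + 1 ≤ (j + 1) * k := by nlinarith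
    exact_mod_cast this
  rw [Nat.cast_mul, mul_comm (m : ℚ), ← div_div]
  exact div_le_div_of_nonneg_right ((div_le_iff₀ hk').2 hblock) (Nat.cast_nonneg m)

theorem sFMN_le_sFMN_mul {A : Type} {add mul : NNLowerReal → NNLowerReal → NNLowerReal}
    (hadd : AddSpecNN add) (hmul : MulSpecNN mul) {μ : (A → Sierp) → NNLowerReal}
    (hμ : Monotone μ) (f : A → NNLowerReal) {m k n n' : ℕ} (hk : 0 < k) (hn : n ≤ n') :
    sFMN add mul μ f m n ≤ sFMN add mul μ f (m * k) n' := by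
  set c : QPlus := ⟨1 / (m : ℚ), by positivity⟩
  set c' : QPlus := ⟨1 / ((m * k : ℕ) : ℚ), by positivity⟩
  set g : ℕ → NNLowerReal := fun i => μ (openGT f (((i : ℚ) + 1) / (m : ℚ)))
  set g' : ℕ → NNLowerReal := fun i => μ (openGT f (((i : ℚ) + 1) / ((m * k : ℕ) : ℚ)))
  have hc : c.1 = k * c'.1 := by
    change 1 / (m : ℚ) = k * (1 / ((m * k : ℕ) : ℚ))
    rw [Nat.cast_mul, mul_one_div, div_mul_cancel_right₀ (by exact_mod_cast hk.ne'), one_div]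
  have hterm : ∀ j, ∀ r < k, g j ≤ g' (j * k + r) := fun j r hr =>
    hμ (openGT_anti f (mul_add_add_one_div_mul_le hk hr))
  rw [sFMN_eq_mul_sumNN, sFMN_eq_mul_sumNN]
  calc mul (ratNN c) (sumNN add g (m * n))
      = sumNN add (fun j => sumNN add (fun _ => mul (ratNN c') (g j)) k) (m * n) := by
        rw [hmul.mul_sumNN hadd]
        exact sumNN_congr fun j _ => hmul.mul_ratNN_eq_sumNN_const hadd hc (g j)
    _ ≤ sumNN add (fun j => sumNN add (fun r => mul (ratNN c') (g' (j * k + r))) k) (m * n) :=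
        hadd.sumNN_mono fun j _ => hadd.sumNN_mono fun r hr => (hmul.1 _).1 (hterm j r hr)
    _ = mul (ratNN c') (sumNN add g' (m * n * k)) := by
        rw [hmul.mul_sumNN hadd, hadd.sumNN_mul (fun i => mul (ratNN c') (g' i)) (m * n) k]
    _ ≤ mul (ratNN c') (sumNN add g' (m * k * n')) :=
        (hmul.1 _).1 (hadd.sumNN_le_sumNN_of_le g'
          (by rw [Nat.mul_right_comm]; exact Nat.mul_le_mul_left _ hn))

/-- if `m ∣ m'` and `n ≤ n'` (all positive), then
`s_{f,m,n} ≤ s_{f,m',n'}`; consequently the family `(s_{f,m,n})_{m,n ≥ 1}` is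
directed. -/
theorem sFMN_monotone_and_directed {A : Type}
    (add mul : NNLowerReal → NNLowerReal → NNLowerReal)
    (hadd : AddSpecNN add) (hmul : MulSpecNN mul)
    (μ : (A → Sierp) → NNLowerReal) (hμ : IsValuation add μ)
    (f : A → NNLowerReal) :
    (∀ m m' n n' : ℕ, 0 < m → 0 < m' → 0 < n → 0 < n' → m ∣ m' → n ≤ n' →
        sFMN add mul μ f m n ≤ sFMN add mul μ f m' n') ∧
      (∀ m n m' n' : ℕ, 0 < m → 0 < n → 0 < m' → 0 < n' →
        ∃ M N : ℕ, 0 < M ∧ 0 < N ∧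
          sFMN add mul μ f m n ≤ sFMN add mul μ f M N ∧
          sFMN add mul μ f m' n' ≤ sFMN add mul μ f M N) := by
  have hmono : ∀ m m' n n' : ℕ, 0 < m → 0 < m' → 0 < n → 0 < n' → m ∣ m' → n ≤ n' →
      sFMN add mul μ f m n ≤ sFMN add mul μ f m' n' := by
    rintro m _ n n' - hm' - - ⟨k, rfl⟩ hn
    exact sFMN_le_sFMN_mul hadd hmul hμ.1.1 f (Nat.pos_of_mul_pos_left hm') hn
  refine ⟨hmono, fun m n m' n' hm hn hm' hn' => ?_⟩
  have hM : 0 < m * m' := Nat.mul_pos hm hm'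
  have hN : 0 < max n n' := hn.trans_le (le_max_left n n')
  exact ⟨m * m', max n n', hM, hN,
    hmono _ _ _ _ hm hM hn hN (dvd_mul_right m m') (le_max_left n n'),
    hmono _ _ _ _ hm' hM hn' hN (dvd_mul_left m' m) (le_max_right n n')⟩
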